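/- Suppose f is a continuously differentiable function on I and 0 < a < b. Then there exists δ > 0 such that for every g ∈ C(I) with ‖g − f‖ < δ (supremum norm), one has B(N̂(g,a), δ) ⊂ N̂(f,b) and B(Ň(g,a), δ) ⊂ Ň(f,b). -/

import Mathlib

open Filter Topology TopologicalSpace Set MeasureTheory

noncomputable section

/-- The unit interval `I = [0,1]` as a type. -/
abbrev UI : Type := ↥(Set.Icc (0:ℝ) 1)

/-- The space `𝒦` of closed subsets of `I`, with the (extended) Hausdorff metric topology. -/
abbrev KSp : Type := TopologicalSpace.Closeds UI

/-- The open `r`-neighbourhood of a set `A` within `I`. -/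
def nbhd (A : Set UI) (r : ℝ) : Set UI := ⋃ a ∈ A, Metric.ball a r

/-- Upper right Dini derivative `D⁺f(x)`, as an extended real. -/
def DiniSupR (f : UI → ℝ) (x : UI) : EReal :=
  Filter.limsup (fun y : UI => (((f y - f x) / ((y : ℝ) - (x : ℝ))) : EReal)) (𝓝[>] x)

/-- Lower right Dini derivative `D₊f(x)`. -/
def DiniInfR (f : UI → ℝ) (x : UI) : EReal :=
  Filter.liminf (fun y : UI => (((f y - f x) / ((y : ℝ) - (x : ℝ))) : EReal)) (𝓝[>] x)

/-- Upper left Dini derivative `D⁻f(x)`. -/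
def DiniSupL (f : UI → ℝ) (x : UI) : EReal :=
  Filter.limsup (fun y : UI => (((f y - f x) / ((y : ℝ) - (x : ℝ))) : EReal)) (𝓝[<] x)

/-- Lower left Dini derivative `D₋f(x)`. -/
def DiniInfL (f : UI → ℝ) (x : UI) : EReal :=
  Filter.liminf (fun y : UI => (((f y - f x) / ((y : ℝ) - (x : ℝ))) : EReal)) (𝓝[<] x)

/-- `x` is a knot point of `f`. -/
def IsKnotPoint (f : UI → ℝ) (x : UI) : Prop :=
  (0 < (x:ℝ) ∧ (x:ℝ) < 1 ∧ DiniSupR f x = ⊤ ∧ DiniSupL f x = ⊤ ∧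
      DiniInfR f x = ⊥ ∧ DiniInfL f x = ⊥) ∨
  ((x:ℝ) = 0 ∧ DiniSupR f x = ⊤ ∧ DiniInfR f x = ⊥) ∨
  ((x:ℝ) = 1 ∧ DiniSupL f x = ⊤ ∧ DiniInfL f x = ⊥)

/-- `N(f)`: the set of points of `I` that are not knot points of `f`. -/
def NonKnot (f : UI → ℝ) : Set UI := {x | ¬ IsKnotPoint f x}

/-- `S` is an `Fσ` subset of `I`. -/
def IsFsigma (S : Set UI) : Prop :=
  ∃ F : ℕ → Set UI, (∀ n, IsClosed (F n)) ∧ S = ⋃ n, F n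

/-- `N⁺(f,a)`. -/
def NplusUp (f : UI → ℝ) (a : ℝ) : Set UI :=
  {x | (x:ℝ) ≤ 1 - 2^(-a) ∧
    ∀ y : UI, (x:ℝ) ≤ (y:ℝ) → (y:ℝ) ≤ (x:ℝ) + 2^(-a) →
      f y - f x ≤ a * ((y:ℝ) - (x:ℝ))}

/-- `N₊(f,a)`. -/
def NplusLow (f : UI → ℝ) (a : ℝ) : Set UI :=
  {x | (x:ℝ) ≤ 1 - 2^(-a) ∧
    ∀ y : UI, (x:ℝ) ≤ (y:ℝ) → (y:ℝ) ≤ (x:ℝ) + 2^(-a) →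
      -a * ((y:ℝ) - (x:ℝ)) ≤ f y - f x}

/-- `N⁻(f,a)`. -/
def NminusUp (f : UI → ℝ) (a : ℝ) : Set UI :=
  {x | 2^(-a) ≤ (x:ℝ) ∧
    ∀ y : UI, (x:ℝ) - 2^(-a) ≤ (y:ℝ) → (y:ℝ) ≤ (x:ℝ) →
      a * ((y:ℝ) - (x:ℝ)) ≤ f y - f x}

/-- `N₋(f,a)`. -/
def NminusLow (f : UI → ℝ) (a : ℝ) : Set UI :=
  {x | 2^(-a) ≤ (x:ℝ) ∧
    ∀ y : UI, (x:ℝ) - 2^(-a) ≤ (y:ℝ) → (y:ℝ) ≤ (x:ℝ) →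
      f y - f x ≤ -a * ((y:ℝ) - (x:ℝ))}

/-- `N̂(f,a) = N⁺(f,a) ∪ N₋(f,a)`. -/
def Nhat (f : UI → ℝ) (a : ℝ) : Set UI := NplusUp f a ∪ NminusLow f a

/-- `Ň(f,a) = N₊(f,a) ∪ N⁻(f,a)`. -/
def Ncheck (f : UI → ℝ) (a : ℝ) : Set UI := NplusLow f a ∪ NminusUp f a

/-- `N(f,a)`. -/
def NN (f : UI → ℝ) (a : ℝ) : Set UI := Nhat f a ∪ Ncheck f a

/-- `f : I → ℝ` is continuously differentiable on `I`. -/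
def IsC1 (f : UI → ℝ) : Prop :=
  ContDiffOn ℝ 1 (Set.IccExtend (zero_le_one : (0:ℝ) ≤ 1) f) (Set.Icc (0:ℝ) 1)

/-- `φ` is a bump function of height `h` and width `w` located at `H1` and `H2`. -/
def IsBump (φ : C(UI, ℝ)) (h w : ℝ) (H1 H2 : Set UI) : Prop :=
  IsC1 ⇑φ ∧ ‖φ‖ = h ∧ (∀ x ∈ H1, φ x = h) ∧ (∀ x ∈ H2, φ x = -h) ∧
  {x : UI | 0 < φ x} ⊆ nbhd H1 w ∧ {x : UI | φ x < 0} ⊆ nbhd H2 w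

/-- The shifted sequence `n^k`. -/
def shiftSeq (n : ℕ → ℕ) (k : ℕ) : ℕ → ℕ := fun j => n (j + k)

/-- The index set `A_j^m(n) = [n_j] ∪ ⋃_{i=j}^{m-1} {n_i+1, …, n_i+j-1}`. -/
def Aset (n : ℕ → ℕ) (j m : ℕ) : Set ℕ :=
  Set.Icc 1 (n j) ∪ ⋃ i ∈ Set.Ico j m, Set.Icc (n i + 1) (n i + (j - 1))

/-- `n ∈ Z`: sequence of positive integers with `n_{j+1} ≥ n_j + j`. -/
def memZ (n : ℕ → ℕ) : Prop := ∀ j, 1 ≤ j → 1 ≤ n j ∧ n j + j ≤ n (j + 1)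

/-- `δ ∈ Y`: strictly decreasing sequence in `(0,1)` tending to `0`. -/
def memY (δ : ℕ → ℝ) : Prop :=
  (∀ j, 1 ≤ j → 0 < δ j ∧ δ j < 1) ∧ (∀ j, 1 ≤ j → δ (j + 1) < δ j) ∧
    Filter.Tendsto δ Filter.atTop (𝓝 0)

/-- `a ∈ X`: strictly increasing sequence of positive reals tending to `∞`. -/
def memX (a : ℕ → ℝ) : Prop :=
  (∀ j, 1 ≤ j → 0 < a j) ∧ (∀ j, 1 ≤ j → a j < a (j + 1)) ∧
    Filter.Tendsto a Filter.atTop Filter.atTop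

/-- `K ∈ 𝒮_k(n,δ)`. -/
def memS (K : ℕ → KSp) (n : ℕ → ℕ) (δ : ℕ → ℝ) (k : ℕ) : Prop :=
  ∀ j m, 2 ≤ j → j + 1 ≤ m →
    (⋃ i ∈ Aset (shiftSeq n k) j m \ Aset (shiftSeq n k) j (m - 1), (K i : Set UI))
      ⊆ ⋃ i ∈ Aset (shiftSeq n k) (j - 1) (m - 1), nbhd (K i : Set UI) (δ m)

/-- `(K, f, n, δ, a, b) ∈ 𝒴_k`. -/
def memYk (K : ℕ → KSp) (f : C(UI, ℝ)) (n : ℕ → ℕ) (δ : ℕ → ℝ) (a b : ℕ → ℝ)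
    (k : ℕ) : Prop :=
  memZ n ∧ memY δ ∧ memX a ∧ memX b ∧ memS K n δ k ∧
  ∀ j m, 1 ≤ j → j ≤ m →
    NN ⇑f (a j) ⊆ (⋃ i ∈ Aset (shiftSeq n k) j m, nbhd (K i : Set UI) (δ m)) ∧
    (⋃ i ∈ Aset n j m, (K i : Set UI)) ⊆ nbhd (NN ⇑f (b j)) (δ m)

/-- `(K, f) ∈ 𝒳`: the projection of `𝒴 = ⋃_k 𝒴_k` to `𝒦^ℕ × C(I)`. -/
def memXcal (K : ℕ → KSp) (f : C(UI, ℝ)) : Prop :=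
  ∃ n δ a b k, memYk K f n δ a b k


/-! The derivative `φ` of a C¹ function is uniformly continuous, and by the mean value theorem
every increment `f t - f s` equals `φ ξ * (t - s)` for some `ξ ∈ [s, t]`. If `x ∈ N⁺(g,a)` with `g`
uniformly close to `f`, the increment of `f` over a short interval `[x, x + ρ]` forces
`φ ≤ (a + b) / 2` somewhere there, hence `φ < b` on a whole window around `x`; this bounds the
increments of `f` from a nearby point `x'` to every `y` in that window. For `y` outside the window,
the slack `(b - a) (y - x')` absorbs the errors `2 ‖g - f‖` and `f x - f x'`. The other one-sided
sets reduce to `N⁺` through `f ↦ -f` and the reflection `t ↦ 1 - t`. -/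

open unitInterval

def HasMeanValueDeriv (f : UI → ℝ) (φ : C(UI, ℝ)) : Prop :=
  ∀ s t : UI, s ≤ t → ∃ ξ ∈ Icc s t, f t - f s = φ ξ * (t - s)

theorem IsC1.exists_hasMeanValueDeriv {f : UI → ℝ} (hf : IsC1 f) :
    ∃ φ : C(UI, ℝ), HasMeanValueDeriv f φ := by
  set F := IccExtend zero_le_one f
  have hφ := (hf.continuousOn_derivWithin (uniqueDiffOn_Icc zero_lt_one) le_rfl).domRestrict
  refine ⟨⟨_, hφ⟩, fun s t hst => ?_⟩
  rcases hst.eq_or_lt with rfl | hst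
  · exact ⟨s, left_mem_Icc.2 le_rfl, by simp⟩
  have hderiv : ∀ u ∈ Ioo (s : ℝ) t, HasDerivAt F (derivWithin F (Icc 0 1) u) u := by
    intro u hu
    have hu01 : Icc (0 : ℝ) 1 ∈ 𝓝 u := Icc_mem_nhds (s.2.1.trans_lt hu.1) (hu.2.trans_le t.2.2)
    rw [derivWithin_of_mem_nhds hu01]
    exact ((hf.differentiableOn one_ne_zero u (mem_of_mem_nhds hu01)).differentiableAt
      hu01).hasDerivAt
  obtain ⟨c, hc, hslope⟩ := exists_hasDerivAt_eq_slope F _ (Subtype.coe_lt_coe.2 hst)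
    (hf.continuousOn.mono (Icc_subset_Icc s.2.1 t.2.2)) hderiv
  refine ⟨⟨c, s.2.1.trans hc.1.le, hc.2.le.trans t.2.2⟩, ⟨hc.1.le, hc.2.le⟩, ?_⟩
  have hts : (0 : ℝ) < t - s := sub_pos.2 hst
  simp only [ContinuousMap.coe_mk, domRestrict_apply, hslope, IccExtend_val, F]
  field_simp

namespace HasMeanValueDeriv

variable {f : UI → ℝ} {φ : C(UI, ℝ)}

theorem neg (hφ : HasMeanValueDeriv f φ) : HasMeanValueDeriv (-f) (-φ) := by
  intro s t hst
  obtain ⟨ξ, hξ, h⟩ := hφ s t hst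
  exact ⟨ξ, hξ, by simp only [Pi.neg_apply, ContinuousMap.neg_apply]; linarith⟩

theorem comp_symm (hφ : HasMeanValueDeriv f φ) :
    HasMeanValueDeriv (f ∘ σ) (-φ.comp ⟨σ, continuous_symm⟩) := by
  intro s t hst
  obtain ⟨ξ, ⟨hξt, hξs⟩, h⟩ := hφ (σ t) (σ s) (symm_le_symm.2 hst)
  refine ⟨σ ξ, ⟨le_symm_comm.1 hξs, symm_le_comm.1 hξt⟩, ?_⟩
  simp only [coe_symm_eq] at h
  simp only [Function.comp_apply, ContinuousMap.neg_apply, ContinuousMap.comp_apply,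
    ContinuousMap.coe_mk, symm_symm]
  linarith

theorem abs_sub_le (hφ : HasMeanValueDeriv f φ) (s t : UI) :
    |f t - f s| ≤ ‖φ‖ * |(t : ℝ) - s| := by
  wlog hst : s ≤ t generalizing s t
  · rw [abs_sub_comm, abs_sub_comm (t : ℝ)]
    exact this t s (le_of_not_ge hst)
  obtain ⟨ξ, -, h⟩ := hφ s t hst
  rw [h, abs_mul]
  exact mul_le_mul_of_nonneg_right (φ.norm_coe_le_norm ξ) (abs_nonneg _)

theorem sub_le_of_sub_le {r ε c : ℝ} (hφ : HasMeanValueDeriv f φ)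
    (hosc : ∀ u v, dist u v < r → dist (φ u) (φ v) < ε) {s t s' t' : UI} (hst : s ≤ t)
    (hst' : s' < t') (hc : f t' - f s' ≤ c * (t' - s')) (hs : (t' : ℝ) - r < s)
    (ht : (t : ℝ) < s' + r) :
    f t - f s ≤ (c + ε) * (t - s) := by
  obtain ⟨ξ, ⟨hsξ, hξt⟩, h⟩ := hφ s t hst
  obtain ⟨ξ', ⟨hsξ', hξt'⟩, h'⟩ := hφ s' t' hst'.le
  have hξξ' : dist ξ ξ' < r := by
    rw [Subtype.dist_eq, Real.dist_eq, abs_lt]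
    have := Subtype.coe_le_coe.2 hsξ; have := Subtype.coe_le_coe.2 hξt
    have := Subtype.coe_le_coe.2 hsξ'; have := Subtype.coe_le_coe.2 hξt'
    constructor <;> linarith
  have hφξ' : φ ξ' ≤ c := by
    rw [h'] at hc
    exact le_of_mul_le_mul_right hc (sub_pos.2 (Subtype.coe_lt_coe.2 hst'))
  have hφξ : φ ξ ≤ c + ε := by
    have := (abs_lt.1 (hosc ξ ξ' hξξ')).2
    linarith
  rw [h]
  exact mul_le_mul_of_nonneg_right hφξ (sub_nonneg.2 (Subtype.coe_le_coe.2 hst))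

end HasMeanValueDeriv

theorem mem_nbhd_iff {A : Set UI} {r : ℝ} {x : UI} :
    x ∈ nbhd A r ↔ ∃ y ∈ A, |(x : ℝ) - y| < r := by
  simp only [nbhd, mem_iUnion₂, Metric.mem_ball, Subtype.dist_eq, Real.dist_eq, exists_prop]

theorem nbhd_union (A B : Set UI) (r : ℝ) : nbhd (A ∪ B) r = nbhd A r ∪ nbhd B r :=
  biUnion_union A B _

theorem nbhd_mono (A : Set UI) {r s : ℝ} (h : r ≤ s) : nbhd A r ⊆ nbhd A s :=
  iUnion₂_mono fun _ _ => Metric.ball_subset_ball h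

theorem nbhd_preimage_symm (A : Set UI) (r : ℝ) : nbhd (σ ⁻¹' A) r = σ ⁻¹' nbhd A r := by
  ext x
  simp only [mem_preimage, mem_nbhd_iff, coe_symm_eq]
  constructor
  · rintro ⟨y, hy, hxy⟩
    exact ⟨σ y, hy, by rw [coe_symm_eq, abs_sub_comm]; convert hxy using 2; ring⟩
  · rintro ⟨y, hy, hxy⟩
    refine ⟨σ y, by rwa [symm_symm], ?_⟩
    rw [coe_symm_eq, abs_sub_comm]; convert hxy using 2; ring

theorem NplusLow_eq_NplusUp_neg (f : UI → ℝ) (a : ℝ) : NplusLow f a = NplusUp (-f) a := by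
  ext x
  refine and_congr_right fun _ => forall₃_congr fun y _ _ => ?_
  simp only [Pi.neg_apply]
  constructor <;> intro <;> linarith

theorem NminusUp_eq_NminusLow_neg (f : UI → ℝ) (a : ℝ) : NminusUp f a = NminusLow (-f) a := by
  ext x
  refine and_congr_right fun _ => forall₃_congr fun y _ _ => ?_
  simp only [Pi.neg_apply]
  constructor <;> intro <;> linarith

theorem Ncheck_eq_Nhat_neg (f : UI → ℝ) (a : ℝ) : Ncheck f a = Nhat (-f) a := by
  rw [Ncheck, Nhat, NplusLow_eq_NplusUp_neg, NminusUp_eq_NminusLow_neg]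

theorem NminusLow_eq_preimage_symm (f : UI → ℝ) (a : ℝ) :
    NminusLow f a = σ ⁻¹' NplusUp (f ∘ σ) a := by
  ext x
  refine and_congr (by rw [coe_symm_eq]; constructor <;> intro <;> linarith) ?_
  conv_rhs => rw [symm_involutive.surjective.forall]
  refine forall_congr' fun y => ?_
  simp only [coe_symm_eq, Function.comp_apply, symm_symm]
  constructor <;> intro h h₁ h₂ <;> linarith [h (by linarith) (by linarith)]

theorem sub_lt_of_mem_NplusUp {f g : UI → ℝ} {a δ : ℝ} (hfg : ∀ t, |g t - f t| < δ) {x y : UI}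
    (hx : x ∈ NplusUp g a) (hxy : (x : ℝ) ≤ y) (hy : (y : ℝ) ≤ x + 2 ^ (-a)) :
    f y - f x < a * (y - x) + 2 * δ := by
  have := hx.2 y hxy hy
  have := abs_lt.1 (hfg x); have := abs_lt.1 (hfg y)
  linarith

theorem HasMeanValueDeriv.exists_nbhd_NplusUp_subset {f : UI → ℝ} {φ : C(UI, ℝ)}
    (hφ : HasMeanValueDeriv f φ) {a b : ℝ} (hab : a < b) :
    ∃ δ > 0, ∀ g : UI → ℝ, (∀ t, |g t - f t| < δ) → nbhd (NplusUp g a) δ ⊆ NplusUp f b := by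
  obtain ⟨r, hr, hosc⟩ := Metric.uniformContinuous_iff.1
    (CompactSpace.uniformContinuous_of_continuous φ.continuous) ((b - a) / 2) (by linarith)
  have h2a : (0 : ℝ) < 2 ^ (-a) := by positivity
  have h2ba : (2 : ℝ) ^ (-b) < 2 ^ (-a) := (Real.rpow_lt_rpow_left_iff one_lt_two).2 (by linarith)
  obtain ⟨ρ, hρ, hρr, hρa⟩ : ∃ ρ > 0, ρ ≤ r / 2 ∧ ρ ≤ 2 ^ (-a) :=
    ⟨min (r / 2) (2 ^ (-a)), lt_min (half_pos hr) h2a, min_le_left _ _, min_le_right _ _⟩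
  have hK : 0 < |a| + 2 + ‖φ‖ := by positivity
  obtain ⟨δ, hδ, hδρ, hδr, hδab, hδK⟩ : ∃ δ > 0, δ ≤ (b - a) * ρ / 4 ∧ δ ≤ r / 4 ∧
      δ ≤ 2 ^ (-a) - 2 ^ (-b) ∧ δ ≤ (b - a) * (r / 4) / (|a| + 2 + ‖φ‖) :=
    ⟨min (min ((b - a) * ρ / 4) (r / 4)) (min (2 ^ (-a) - 2 ^ (-b)) ((b - a) * (r / 4) / _)),
      by have := sub_pos.2 hab; have := sub_pos.2 h2ba; positivity,
      (min_le_left _ _).trans (min_le_left _ _), (min_le_left _ _).trans (min_le_right _ _),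
      (min_le_right _ _).trans (min_le_left _ _), (min_le_right _ _).trans (min_le_right _ _)⟩
  refine ⟨δ, hδ, fun g hfg x' hx' => ?_⟩
  obtain ⟨x, hx, hx'x⟩ := mem_nbhd_iff.1 hx'
  have ⟨hx'x₁, hx'x₂⟩ := abs_lt.1 hx'x
  refine ⟨by linarith [hx.1], fun y hx'y hy => ?_⟩
  by_cases hnear : (y : ℝ) ≤ x + r / 2
  · -- compare with the slope of `f` on `[x, x + ρ]`, which is at most `(a + b) / 2`
    set xρ : UI := ⟨x + ρ, by linarith [x.2.1], by linarith [hx.1]⟩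
    have hxρ : (xρ : ℝ) = x + ρ := rfl
    have hincr := sub_lt_of_mem_NplusUp hfg hx (y := xρ) (by linarith) (by linarith)
    have := hφ.sub_le_of_sub_le hosc (c := (a + b) / 2) (Subtype.coe_le_coe.1 hx'y)
      (Subtype.coe_lt_coe.1 (by linarith : (x : ℝ) < xρ)) (by rw [hxρ] at hincr ⊢; linarith)
      (by linarith) (by linarith)
    linarith
  · -- far from `x`, the excess over slope `a` is absorbed by the gap `(b - a) (y - x')`
    have hincr := sub_lt_of_mem_NplusUp hfg hx (y := y) (by linarith) (by linarith)
    have hlip : f x - f x' ≤ ‖φ‖ * δ := by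
      have := (abs_le.1 (hφ.abs_sub_le x' x)).2
      have := mul_le_mul_of_nonneg_left (abs_sub_comm (x : ℝ) x' ▸ hx'x.le) (norm_nonneg φ)
      linarith
    have hshift : a * ((x' : ℝ) - x) ≤ |a| * δ :=
      calc a * ((x' : ℝ) - x) ≤ |a * ((x' : ℝ) - x)| := le_abs_self _
        _ = |a| * |(x' : ℝ) - x| := abs_mul _ _
        _ ≤ |a| * δ := by gcongr
    have hgap : (|a| + 2 + ‖φ‖) * δ ≤ (b - a) * (y - x') :=
      calc (|a| + 2 + ‖φ‖) * δ ≤ (b - a) * (r / 4) := by rwa [le_div_iff₀' hK] at hδK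
        _ ≤ (b - a) * (y - x') := by gcongr; linarith
    linarith

theorem nbhd_subset_of_le {S : (UI → ℝ) → Set UI} {T : Set UI} {f g : UI → ℝ} {δ δ' : ℝ}
    (h : ∀ g : UI → ℝ, (∀ t, |g t - f t| < δ) → nbhd (S g) δ ⊆ T) (hδ' : δ' ≤ δ)
    (hg : ∀ t, |g t - f t| < δ') : nbhd (S g) δ' ⊆ T :=
  (nbhd_mono _ hδ').trans (h g fun t => (hg t).trans_le hδ')

theorem HasMeanValueDeriv.exists_nbhd_Nhat_subset {f : UI → ℝ} {φ : C(UI, ℝ)}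
    (hφ : HasMeanValueDeriv f φ) {a b : ℝ} (hab : a < b) :
    ∃ δ > 0, ∀ g : UI → ℝ, (∀ t, |g t - f t| < δ) → nbhd (Nhat g a) δ ⊆ Nhat f b := by
  obtain ⟨δ₁, hδ₁, h₁⟩ := hφ.exists_nbhd_NplusUp_subset hab
  obtain ⟨δ₂, hδ₂, h₂⟩ := hφ.comp_symm.exists_nbhd_NplusUp_subset hab
  refine ⟨min δ₁ δ₂, lt_min hδ₁ hδ₂, fun g hfg => ?_⟩
  simp only [Nhat, NminusLow_eq_preimage_symm, nbhd_union, nbhd_preimage_symm]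
  exact union_subset_union (nbhd_subset_of_le h₁ (min_le_left _ _) hfg)
    (preimage_mono (nbhd_subset_of_le h₂ (min_le_right _ _) fun t => hfg (σ t)))

theorem nbhd_N_subset_of_C1_uniform_general (f : C(UI, ℝ)) (hf : IsC1 ⇑f) (a b : ℝ)
    (hab : a < b) :
    ∃ δ > 0, ∀ g : C(UI, ℝ), ‖g - f‖ < δ →
      nbhd (Nhat ⇑g a) δ ⊆ Nhat ⇑f b ∧ nbhd (Ncheck ⇑g a) δ ⊆ Ncheck ⇑f b := by
  obtain ⟨φ, hφ⟩ := hf.exists_hasMeanValueDeriv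
  obtain ⟨δ₁, hδ₁, h₁⟩ := hφ.exists_nbhd_Nhat_subset hab
  obtain ⟨δ₂, hδ₂, h₂⟩ := hφ.neg.exists_nbhd_Nhat_subset hab
  refine ⟨min δ₁ δ₂, lt_min hδ₁ hδ₂, fun g hg => ?_⟩
  have hfg (t : UI) : |g t - f t| < min δ₁ δ₂ := ((g - f).norm_coe_le_norm t).trans_lt hg
  rw [Ncheck_eq_Nhat_neg, Ncheck_eq_Nhat_neg]
  exact ⟨nbhd_subset_of_le h₁ (min_le_left _ _) hfg, nbhd_subset_of_le h₂ (min_le_right _ _)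
    fun t => by simpa only [Pi.neg_apply, neg_sub_neg, abs_sub_comm] using hfg t⟩

/-- If `f ∈ C¹(I)` and `0 < a < b`, then there is `δ > 0` such that
`B(N̂(g,a),δ) ⊆ N̂(f,b)` and `B(Ň(g,a),δ) ⊆ Ň(f,b)` for every `g ∈ B(f,δ)`. -/
theorem nbhd_N_subset_of_C1_uniform (f : C(UI, ℝ)) (hf : IsC1 ⇑f) (a b : ℝ)
    (ha : 0 < a) (hab : a < b) :
    ∃ δ > 0, ∀ g : C(UI, ℝ), ‖g - f‖ < δ →
      nbhd (Nhat ⇑g a) δ ⊆ Nhat ⇑f b ∧ nbhd (Ncheck ⇑g a) δ ⊆ Ncheck ⇑f b :=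
  nbhd_N_subset_of_C1_uniform_general f hf a b hab

end
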